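/- Let P = (p_1, …, p_n) be a finite sequence of pairwise distinct points in ℝ^d and let 1 ≤ i < j ≤ n. If there exists c ∈ ℝ^d with dist(c, p_i) = dist(c, p_j) and dist(c, p_k) > dist(c, p_i) for all k ≤ j with k ≠ i and k ≠ j (a strict witness of Voronoi adjacency of p_i and p_j in P_{1:j}), then Cell(p_i; P_{1:j}) is a proper subset of Cell(p_i; P_{1:j−1}); i.e., the insertion of p_j prunes the Voronoi cell of p_i. -/

import Mathlib

open Set

noncomputable section

/-- Euclidean space `ℝ^d`. -/
abbrev E (d : ℕ) := EuclideanSpace ℝ (Fin d)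

/-- The Voronoi cell of `p` with respect to the site set `S`:
all points at least as close to `p` as to every site of `S`. -/
def cell {d : ℕ} (p : E d) (S : Set (E d)) : Set (E d) :=
  {x | ∀ s ∈ S, dist x p ≤ dist x s}

/-- The prefix set `P_{1:m}` consisting of the first `m` points of the
sequence `p` (0-based indices `< m`). -/
def pref {d n : ℕ} (p : Fin n → E d) (m : ℕ) : Set (E d) :=
  p '' {i : Fin n | (i : ℕ) < m}

/-- `p j` is a successor of `p i` (`p j ∈ L i`): `i < j` and the insertion of
`p j` prunes the Voronoi cell of `p i`, i.e. `Cell(p_i; P_{1:j})` is a proper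
subset of `Cell(p_i; P_{1:j-1})` (in 1-based notation). -/
def isSucc {d n : ℕ} (p : Fin n → E d) (i j : Fin n) : Prop :=
  i < j ∧ cell (p i) (pref p ((j : ℕ) + 1)) ⊂ cell (p i) (pref p (j : ℕ))

/-- `p i` is the nearest neighbor `Φ_{1:m}(q)` of `q` in the prefix `P_{1:m}`. -/
def isNearest {d n : ℕ} (p : Fin n → E d) (q : E d) (m : ℕ) (i : Fin n) : Prop :=
  (i : ℕ) < m ∧ ∀ j : Fin n, (j : ℕ) < m → dist q (p i) ≤ dist q (p j)

/-!
Move from the witness `c` a little in the direction `p_j - p_i`. Since `c` lies on the bisector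
of `p_i` and `p_j`, every such point is strictly closer to `p_j` than to `p_i`, so it leaves the
new cell; since `c` is strictly closer to `p_i` than to the other (finitely many) earlier sites,
points close enough to `c` stay in the old cell.
-/

open Filter Topology

/-- The squared distances to `a` and to `b` differ by an affine function whose slope in the
direction `b - a` is `2 ‖b - a‖²`. -/
theorem dist_add_smul_sub_lt_of_dist_eq {F : Type*} [NormedAddCommGroup F] [InnerProductSpace ℝ F]
    {a b c : F} (hab : a ≠ b) (hc : dist c a = dist c b) {t : ℝ} (ht : 0 < t) :
    dist (c + t • (b - a)) b < dist (c + t • (b - a)) a := by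
  have hsq (q : F) : dist (c + t • (b - a)) q ^ 2
      = ‖c - q‖ ^ 2 + 2 * t * inner ℝ (c - q) (b - a) + t ^ 2 * ‖b - a‖ ^ 2 := by
    rw [dist_eq_norm, add_sub_right_comm, norm_add_sq_real, real_inner_smul_right, norm_smul,
      Real.norm_eq_abs, abs_of_pos ht]
    ring
  have hinner : inner ℝ (c - a) (b - a) - inner ℝ (c - b) (b - a) = ‖b - a‖ ^ 2 := by
    rw [← inner_sub_left, sub_sub_sub_cancel_left, real_inner_self_eq_norm_sq]
  have hba : 0 < ‖b - a‖ := norm_pos_iff.mpr (sub_ne_zero.mpr hab.symm)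
  have hnorm : ‖c - a‖ = ‖c - b‖ := by rwa [← dist_eq_norm, ← dist_eq_norm]
  refine lt_of_pow_lt_pow_left₀ 2 dist_nonneg ?_
  rw [hsq, hsq, hnorm]
  nlinarith [mul_pos ht (pow_pos hba 2)]

theorem cell_anti {d : ℕ} (p : E d) {S T : Set (E d)} (hST : S ⊆ T) : cell p T ⊆ cell p S :=
  fun _ hx s hs => hx s (hST hs)

theorem eventually_mem_cell {d : ℕ} {p c : E d} {S : Set (E d)} (hS : S.Finite)
    (hc : ∀ s ∈ S, s ≠ p → dist c p < dist c s) : ∀ᶠ x in 𝓝 c, x ∈ cell p S := by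
  refine hS.eventually_all.mpr fun s hs => ?_
  obtain rfl | hsp := eq_or_ne s p
  · exact Eventually.of_forall fun _ => le_rfl
  · exact ((continuous_id.dist continuous_const).continuousAt.eventually_lt
      (continuous_id.dist continuous_const).continuousAt (hc s hs hsp)).mono fun _ => le_of_lt

theorem cell_insert_ssubset {d : ℕ} {p q c : E d} {S : Set (E d)} (hS : S.Finite) (hpq : p ≠ q)
    (heq : dist c p = dist c q) (hc : ∀ s ∈ S, s ≠ p → dist c p < dist c s) :
    cell p (insert q S) ⊂ cell p S := by
  refine (ssubset_iff_of_subset (cell_anti p (subset_insert q S))).mpr ?_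
  have hpath : Tendsto (fun t : ℝ => c + t • (q - p)) (𝓝[>] 0) (𝓝 c) := by
    have : Continuous fun t : ℝ => c + t • (q - p) := by fun_prop
    simpa using this.continuousWithinAt.tendsto (x := 0) (s := Ioi 0)
  obtain ⟨t, hxS, ht⟩ :=
    ((hpath.eventually (eventually_mem_cell hS hc)).and self_mem_nhdsWithin).exists
  exact ⟨_, hxS, fun hx => (dist_add_smul_sub_lt_of_dist_eq hpq heq ht).not_ge
    (hx q (mem_insert q S))⟩

theorem pref_succ {d n : ℕ} (p : Fin n → E d) (j : Fin n) :
    pref p ((j : ℕ) + 1) = insert (p j) (pref p j) := by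
  ext x
  simp only [pref, mem_image, mem_ofPred_eq, mem_insert_iff, Nat.lt_succ_iff_lt_or_eq, Fin.val_inj]
  grind

theorem stmt11_general
    {d n : ℕ}
    (p : Fin n → E d) (hp : Function.Injective p)
    (i j : Fin n) (hij : i < j) (c : E d)
    (heq : dist c (p i) = dist c (p j))
    (hstrict : ∀ k : Fin n, k ≤ j → k ≠ i → k ≠ j →
      dist c (p i) < dist c (p k)) :
    cell (p i) (pref p ((j : ℕ) + 1)) ⊂ cell (p i) (pref p (j : ℕ)) := by
  rw [pref_succ]
  refine cell_insert_ssubset ((toFinite _).image p) (hp.ne hij.ne) heq ?_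
  rintro _ ⟨k, hk, rfl⟩ hki
  exact hstrict k (Fin.le_of_lt hk) (fun h => hki (congrArg p h)) (Fin.ne_of_lt hk)

/-- a strict witness of Voronoi adjacency of `p_i` and `p_j`
in `P_{1:j}` implies that the insertion of `p_j` prunes the Voronoi cell of
`p_i`. -/
theorem stmt11
    {d n : ℕ} (hd : 1 ≤ d)
    (p : Fin n → E d) (hp : Function.Injective p)
    (i j : Fin n) (hij : i < j) (c : E d)
    (heq : dist c (p i) = dist c (p j))
    (hstrict : ∀ k : Fin n, k ≤ j → k ≠ i → k ≠ j →
      dist c (p i) < dist c (p k)) :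
    cell (p i) (pref p ((j : ℕ) + 1)) ⊂ cell (p i) (pref p (j : ℕ)) :=
  stmt11_general p hp i j hij c heq hstrict
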